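/- Let r and s be integers with s ≥ 3 and r ≥ s+1, let τ > 1, and suppose that all four first-order partial derivatives of φ vanish at the point x_τ = (α_τ, β_τ, γ_τ, δ_τ) (which lies in the interior of K). Then φ(x_τ) = ln τ + ((s−1)/s)·(rs−r−s)·ln(rs−r−s − s·α_τ). -/

import Mathlib

noncomputable section

/-- `g(x) = x·ln x` (note `g(0) = 0` automatically, since `Real.log 0 = 0`). -/
def xlog (x : ℝ) : ℝ := x * Real.log x

/-- `h(r,s) = (r−2)² + 2(s−2)(r−1)(r−2) + (1/2)(s−2)(s−3)(r−1)²`. -/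
def hRS (r s : ℝ) : ℝ :=
  (r - 2) ^ 2 + 2 * (s - 2) * (r - 1) * (r - 2) + (1 / 2) * (s - 2) * (s - 3) * (r - 1) ^ 2

/-- `κ₁ = (r−1)^{s−2}(r−2)²(s−1)(s−2)^{2(s−2)}` (real exponents, via `rpow`). -/
def kap1 (r s : ℝ) : ℝ := (r - 1) ^ (s - 2) * (r - 2) ^ 2 * (s - 1) * (s - 2) ^ (2 * (s - 2))

/-- `κ₂ = 2h(r,s)/(r−2)²`. -/
def kap2 (r s : ℝ) : ℝ := 2 * hRS r s / (r - 2) ^ 2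

/-- `κ₃ = (rs−r−s)²/h(r,s)`. -/
def kap3 (r s : ℝ) : ℝ := (r * s - r - s) ^ 2 / hRS r s

/-- `κ₄ = (r−3)/(r−2)`. -/
def kap4 (r : ℝ) : ℝ := (r - 3) / (r - 2)

/-- The function `φ` of four real variables `(α,β,γ,δ)` (with parameters `r,s`). -/
def phiRS (r s α β γ δ : ℝ) : ℝ :=
  xlog (1 - α - β) + 2 * (s - 1) * xlog α + ((s - 1) / s) * xlog (r * s - r - s - s * α)
    - xlog (β - γ) - xlog δ - 2 * xlog γ - 2 * xlog (α - β - δ)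
    - xlog ((s - 3) * α + β + δ) - xlog (1 - α - β - γ)
    + α * Real.log (kap1 r s) + β * Real.log (kap2 r s) + γ * Real.log (kap3 r s)
    + δ * Real.log (kap4 r)

/-- Membership in the domain `K = {(α,β,γ,δ) : 0 ≤ γ ≤ β, 0 ≤ δ ≤ α−β, α+β+γ ≤ 1}`. -/
def memK (α β γ δ : ℝ) : Prop :=
  0 ≤ γ ∧ γ ≤ β ∧ 0 ≤ δ ∧ δ ≤ α - β ∧ α + β + γ ≤ 1

/-- `L(r,s) = ln(r−1) + ln(s−1) + ((s−1)(rs−r−s)/s)·ln(1 − s/(rs−r))`;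
the hypothesis `r > ρ(s)` means `r ≥ s+1` and `L(r,s) > 0`. -/
def Lfun (r s : ℝ) : ℝ :=
  Real.log (r - 1) + Real.log (s - 1) +
    ((s - 1) * (r * s - r - s) / s) * Real.log (1 - s / (r * s - r))

end

noncomputable section

/-- `D_τ = (τ−1)² + 2κ₃τ − κ₃`. -/
def DT (r s τ : ℝ) : ℝ := (τ - 1) ^ 2 + 2 * kap3 r s * τ - kap3 r s

/-- `p_τ = ((τ−1)² + κ₃(τ−1))/D_τ`. -/
def pT (r s τ : ℝ) : ℝ := ((τ - 1) ^ 2 + kap3 r s * (τ - 1)) / DT r s τ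

/-- `q_τ = κ₄·τ·(τ−1)²/(κ₂·D_τ)`. -/
def qT (r s τ : ℝ) : ℝ := kap4 r * τ * (τ - 1) ^ 2 / (kap2 r s * DT r s τ)

/-- `N_τ = p_τ + q_τ + ((s−3)/(2κ₄))q_τ + √((s−2)/κ₄·q_τ(p_τ+q_τ) + (s−3)²/(4κ₄²)·q_τ²)`. -/
def NT (r s τ : ℝ) : ℝ :=
  pT r s τ + qT r s τ + ((s - 3) / (2 * kap4 r)) * qT r s τ +
    Real.sqrt (((s - 2) / kap4 r) * qT r s τ * (pT r s τ + qT r s τ) +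
      ((s - 3) ^ 2 / (4 * (kap4 r) ^ 2)) * (qT r s τ) ^ 2)

/-- `α_τ = N_τ/(1+N_τ)`. -/
def alphaT (r s τ : ℝ) : ℝ := NT r s τ / (1 + NT r s τ)

/-- `β_τ = p_τ(1−α_τ)`. -/
def betaT (r s τ : ℝ) : ℝ := pT r s τ * (1 - alphaT r s τ)

/-- `γ_τ = (κ₃(τ−1)/D_τ)(1−α_τ)`. -/
def gammaT (r s τ : ℝ) : ℝ := (kap3 r s * (τ - 1) / DT r s τ) * (1 - alphaT r s τ)

/-- `δ_τ = q_τ(1−α_τ)`. -/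
def deltaT (r s τ : ℝ) : ℝ := qT r s τ * (1 - alphaT r s τ)

end

/-!
Each variable has total weight zero across the `xlog` terms of `φ` (for `α`:
`−1 + 2(s−1) − (s−1) − 2 − (s−3) + 1 = 0`), so the `+1`'s coming from `(x ln x)' = ln x + 1`
cancel and every partial derivative of `φ` is a linear combination of logarithms. Hence in
`φ − Σ xᵢ ∂ᵢφ` only the constant parts of the affine arguments of `xlog` survive:
`ln(1−α−β) − ln(1−α−β−γ) + ((s−1)/s)(rs−r−s) ln(rs−r−s−sα)`. At a critical point the sum
vanishes, and at `x_τ` one has `1−α−β = τ(1−α−β−γ)`, which turns the first two logarithms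
into `ln τ`.
-/

open Real

theorem HasDerivAt.xlog {f : ℝ → ℝ} {f' x : ℝ} (hf : HasDerivAt f f' x) (hx : f x ≠ 0) :
    HasDerivAt (fun y => xlog (f y)) ((Real.log (f x) + 1) * f') x :=
  (hasDerivAt_mul_log hx).comp x hf

def memIntK (α β γ δ : ℝ) : Prop :=
  0 < γ ∧ γ < β ∧ 0 < δ ∧ δ < α - β ∧ α + β + γ < 1

noncomputable section PartialDerivatives

variable {r s α β γ δ : ℝ}

def phiRS_dα (r s α β γ δ : ℝ) : ℝ :=
  -log (1 - α - β) + 2 * (s - 1) * log α - (s - 1) * log (r * s - r - s - s * α)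
    - 2 * log (α - β - δ) - (s - 3) * log ((s - 3) * α + β + δ) + log (1 - α - β - γ)
    + log (kap1 r s)

def phiRS_dβ (r s α β γ δ : ℝ) : ℝ :=
  -log (1 - α - β) - log (β - γ) + 2 * log (α - β - δ) - log ((s - 3) * α + β + δ)
    + log (1 - α - β - γ) + log (kap2 r s)

def phiRS_dγ (r s α β γ : ℝ) : ℝ :=
  log (β - γ) - 2 * log γ + log (1 - α - β - γ) + log (kap3 r s)

def phiRS_dδ (r s α β δ : ℝ) : ℝ :=
  -log δ + 2 * log (α - β - δ) - log ((s - 3) * α + β + δ) + log (kap4 r)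

theorem memIntK.xlog_args_pos (hs : 3 ≤ s) (hr : s + 1 ≤ r) (hx : memIntK α β γ δ) :
    0 < α ∧ 0 < 1 - α - β ∧ 0 < r * s - r - s - s * α ∧ 0 < β - γ ∧ 0 < δ ∧ 0 < γ ∧
      0 < α - β - δ ∧ 0 < (s - 3) * α + β + δ ∧ 0 < 1 - α - β - γ := by
  obtain ⟨hγ, hγβ, hδ, hδα, hsum⟩ := hx
  have hα1 : α < 1 := by linarith
  refine ⟨by linarith, by linarith, ?_, by linarith, hδ, hγ, by linarith, ?_, by linarith⟩
  · nlinarith [mul_le_mul_of_nonneg_right hr (by linarith : (0 : ℝ) ≤ s - 1)]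
  · nlinarith

theorem hasDerivAt_phiRS_α (hs : 3 ≤ s) (hr : s + 1 ≤ r) (hx : memIntK α β γ δ) :
    HasDerivAt (fun x => phiRS r s x β γ δ) (phiRS_dα r s α β γ δ) α := by
  obtain ⟨hα, h₁, h₂, -, -, -, h₃, h₄, h₅⟩ := hx.xlog_args_pos hs hr
  have hid := hasDerivAt_id' α
  have e₁ := HasDerivAt.xlog ((hid.const_sub 1).sub_const β) h₁.ne'
  have e₂ := HasDerivAt.xlog hid hα.ne'
  have e₃ := HasDerivAt.xlog ((hid.const_mul s).const_sub (r * s - r - s)) h₂.ne'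
  have e₄ := HasDerivAt.xlog ((hid.sub_const β).sub_const δ) h₃.ne'
  have e₅ := HasDerivAt.xlog (((hid.const_mul (s - 3)).add_const β).add_const δ) h₄.ne'
  have e₆ := HasDerivAt.xlog (((hid.const_sub 1).sub_const β).sub_const γ) h₅.ne'
  refine ((((((((((((e₁.add (e₂.const_mul _)).add (e₃.const_mul _)).sub_const _).sub_const
    _).sub_const _).sub (e₄.const_mul 2)).sub e₅).sub e₆).add (hid.mul_const _)).add_const
    _).add_const _).add_const _).congr_deriv ?_
  rw [phiRS_dα]
  field_simp
  ring

theorem hasDerivAt_phiRS_β (hs : 3 ≤ s) (hr : s + 1 ≤ r) (hx : memIntK α β γ δ) :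
    HasDerivAt (fun x => phiRS r s α x γ δ) (phiRS_dβ r s α β γ δ) β := by
  obtain ⟨-, h₁, -, h₂, -, -, h₃, h₄, h₅⟩ := hx.xlog_args_pos hs hr
  have hid := hasDerivAt_id' β
  have e₁ := HasDerivAt.xlog (hid.const_sub (1 - α)) h₁.ne'
  have e₂ := HasDerivAt.xlog (hid.sub_const γ) h₂.ne'
  have e₃ := HasDerivAt.xlog ((hid.const_sub α).sub_const δ) h₃.ne'
  have e₄ := HasDerivAt.xlog ((hid.const_add ((s - 3) * α)).add_const δ) h₄.ne'
  have e₅ := HasDerivAt.xlog ((hid.const_sub (1 - α)).sub_const γ) h₅.ne'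
  refine ((((((((((((e₁.add_const _).add_const _).sub e₂).sub_const _).sub_const _).sub
    (e₃.const_mul 2)).sub e₄).sub e₅).add_const _).add (hid.mul_const _)).add_const _).add_const
    _).congr_deriv ?_
  rw [phiRS_dβ]
  ring

theorem hasDerivAt_phiRS_γ (hs : 3 ≤ s) (hr : s + 1 ≤ r) (hx : memIntK α β γ δ) :
    HasDerivAt (fun x => phiRS r s α β x δ) (phiRS_dγ r s α β γ) γ := by
  obtain ⟨-, -, -, h₁, -, h₂, -, -, h₃⟩ := hx.xlog_args_pos hs hr
  have hid := hasDerivAt_id' γ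
  have e₁ := HasDerivAt.xlog (hid.const_sub β) h₁.ne'
  have e₂ := HasDerivAt.xlog hid h₂.ne'
  have e₃ := HasDerivAt.xlog (hid.const_sub (1 - α - β)) h₃.ne'
  refine ((((((((((e₁.const_sub _).sub_const _).sub (e₂.const_mul 2)).sub_const _).sub_const
    _).sub e₃).add_const _).add_const _).add (hid.mul_const _)).add_const _).congr_deriv ?_
  rw [phiRS_dγ]
  ring

theorem hasDerivAt_phiRS_δ (hs : 3 ≤ s) (hr : s + 1 ≤ r) (hx : memIntK α β γ δ) :
    HasDerivAt (fun x => phiRS r s α β γ x) (phiRS_dδ r s α β δ) δ := by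
  obtain ⟨-, -, -, -, h₁, -, h₂, h₃, -⟩ := hx.xlog_args_pos hs hr
  have hid := hasDerivAt_id' δ
  have e₁ := HasDerivAt.xlog hid h₁.ne'
  have e₂ := HasDerivAt.xlog (hid.const_sub (α - β)) h₂.ne'
  have e₃ := HasDerivAt.xlog (hid.const_add ((s - 3) * α + β)) h₃.ne'
  refine (((((((((e₁.const_sub _).sub_const _).sub (e₂.const_mul 2)).sub
    e₃).sub_const _).add_const _).add_const _).add_const _).add (hid.mul_const _)).congr_deriv ?_
  rw [phiRS_dδ]
  ring

theorem phiRS_eq_euler (hs : s ≠ 0) :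
    phiRS r s α β γ δ =
      α * phiRS_dα r s α β γ δ + β * phiRS_dβ r s α β γ δ + γ * phiRS_dγ r s α β γ
        + δ * phiRS_dδ r s α β δ + log (1 - α - β) - log (1 - α - β - γ)
        + (s - 1) / s * (r * s - r - s) * log (r * s - r - s - s * α) := by
  simp only [phiRS, xlog, phiRS_dα, phiRS_dβ, phiRS_dγ, phiRS_dδ]
  field_simp
  ring

theorem phiRS_of_deriv_eq_zero (hs : 3 ≤ s) (hr : s + 1 ≤ r) (hx : memIntK α β γ δ)
    (h₁ : deriv (fun x => phiRS r s x β γ δ) α = 0)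
    (h₂ : deriv (fun x => phiRS r s α x γ δ) β = 0)
    (h₃ : deriv (fun x => phiRS r s α β x δ) γ = 0)
    (h₄ : deriv (fun x => phiRS r s α β γ x) δ = 0) :
    phiRS r s α β γ δ = log (1 - α - β) - log (1 - α - β - γ)
      + (s - 1) / s * (r * s - r - s) * log (r * s - r - s - s * α) := by
  rw [phiRS_eq_euler (by linarith), ← (hasDerivAt_phiRS_α hs hr hx).deriv, h₁,
    ← (hasDerivAt_phiRS_β hs hr hx).deriv, h₂, ← (hasDerivAt_phiRS_γ hs hr hx).deriv, h₃,
    ← (hasDerivAt_phiRS_δ hs hr hx).deriv, h₄]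
  ring

end PartialDerivatives

section StationaryPoint

variable {r s τ : ℝ}

theorem hRS_pos (hs : 3 ≤ s) (hr : 2 < r) : 0 < hRS r s := by
  obtain ⟨a, ha, rfl⟩ : ∃ a, 0 ≤ a ∧ s = a + 3 := ⟨s - 3, by linarith, by ring⟩
  obtain ⟨b, hb, rfl⟩ : ∃ b, 0 < b ∧ r = b + 2 := ⟨r - 2, by linarith, by ring⟩
  rw [hRS]
  ring_nf
  positivity

theorem kap2_pos (hs : 3 ≤ s) (hr : 2 < r) : 0 < kap2 r s :=
  div_pos (mul_pos two_pos (hRS_pos hs hr)) (pow_pos (by linarith) 2)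

theorem kap3_pos (hs : 3 ≤ s) (hr : 2 < r) : 0 < kap3 r s :=
  div_pos (pow_pos (by nlinarith) 2) (hRS_pos hs hr)

theorem kap4_pos (hr : 3 < r) : 0 < kap4 r :=
  div_pos (by linarith) (by linarith)

theorem DT_pos (hκ : 0 < kap3 r s) (hτ : 1 < τ) : 0 < DT r s τ := by
  rw [DT]
  nlinarith [sq_nonneg (τ - 1)]

theorem pT_pos (hκ : 0 < kap3 r s) (hτ : 1 < τ) : 0 < pT r s τ :=
  div_pos (by nlinarith [sq_nonneg (τ - 1)]) (DT_pos hκ hτ)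

theorem qT_pos (hκ₂ : 0 < kap2 r s) (hκ₃ : 0 < kap3 r s) (hκ₄ : 0 < kap4 r) (hτ : 1 < τ) :
    0 < qT r s τ :=
  div_pos (by have := sub_pos.2 hτ; positivity) (mul_pos hκ₂ (DT_pos hκ₃ hτ))

theorem NT_sub_pT_sub_qT_pos (hs : 3 ≤ s) (hκ₄ : 0 < kap4 r) (hp : 0 < pT r s τ)
    (hq : 0 < qT r s τ) : 0 < NT r s τ - pT r s τ - qT r s τ := by
  have hroot : 0 < √((s - 2) / kap4 r * qT r s τ * (pT r s τ + qT r s τ)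
      + (s - 3) ^ 2 / (4 * kap4 r ^ 2) * qT r s τ ^ 2) := by
    have := div_pos (by linarith : (0 : ℝ) < s - 2) hκ₄
    apply Real.sqrt_pos.2
    positivity
  have hlin : 0 ≤ (s - 3) / (2 * kap4 r) * qT r s τ := by
    have := sub_nonneg.2 hs
    positivity
  rw [NT]
  linarith

theorem one_sub_alphaT_pos (hN : 0 < NT r s τ) : 0 < 1 - alphaT r s τ := by
  rw [alphaT, sub_pos, div_lt_one (by linarith)]
  linarith

theorem alphaT_eq_NT_mul (hN : 0 < NT r s τ) : alphaT r s τ = NT r s τ * (1 - alphaT r s τ) := by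
  rw [alphaT]
  field_simp
  ring

theorem one_sub_pT (hD : DT r s τ ≠ 0) : 1 - pT r s τ = kap3 r s * τ / DT r s τ := by
  rw [pT]
  field_simp
  rw [DT]
  ring

theorem pT_sub :
    pT r s τ - kap3 r s * (τ - 1) / DT r s τ = (τ - 1) ^ 2 / DT r s τ := by
  rw [pT]
  ring

theorem one_sub_pT_sub (hD : DT r s τ ≠ 0) :
    1 - pT r s τ - kap3 r s * (τ - 1) / DT r s τ = kap3 r s / DT r s τ := by
  rw [one_sub_pT hD]
  field_simp
  ring

theorem memIntK_xτ (hs : 3 ≤ s) (hr : s + 1 ≤ r) (hτ : 1 < τ) :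
    memIntK (alphaT r s τ) (betaT r s τ) (gammaT r s τ) (deltaT r s τ) := by
  have hκ₃ := kap3_pos hs (by linarith : 2 < r)
  have hD := DT_pos hκ₃ hτ
  have hp := pT_pos hκ₃ hτ
  have hq := qT_pos (kap2_pos hs (by linarith)) hκ₃ (kap4_pos (by linarith)) hτ
  have hNpq := NT_sub_pT_sub_qT_pos hs (kap4_pos (by linarith)) hp hq
  have hu := one_sub_alphaT_pos (by linarith : 0 < NT r s τ)
  have hα := alphaT_eq_NT_mul (by linarith : 0 < NT r s τ)
  have hτ₁ := sub_pos.2 hτ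
  refine ⟨?_, ?_, mul_pos hq hu, ?_, ?_⟩
  · rw [gammaT]
    positivity
  · rw [← sub_pos, show betaT r s τ - gammaT r s τ
        = (τ - 1) ^ 2 / DT r s τ * (1 - alphaT r s τ) by rw [betaT, gammaT, ← pT_sub]; ring]
    positivity
  · rw [← sub_pos, show alphaT r s τ - betaT r s τ - deltaT r s τ
        = (NT r s τ - pT r s τ - qT r s τ) * (1 - alphaT r s τ) by
      rw [betaT, deltaT]; linear_combination hα]
    exact mul_pos hNpq hu
  · rw [← sub_pos, show 1 - (alphaT r s τ + betaT r s τ + gammaT r s τ)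
        = kap3 r s / DT r s τ * (1 - alphaT r s τ) by
      rw [betaT, gammaT, ← one_sub_pT_sub hD.ne']; ring]
    positivity

theorem one_sub_alphaT_sub_betaT (hD : DT r s τ ≠ 0) :
    1 - alphaT r s τ - betaT r s τ
      = τ * (1 - alphaT r s τ - betaT r s τ - gammaT r s τ) := by
  rw [betaT, gammaT]
  linear_combination (1 - alphaT r s τ) * (one_sub_pT hD - τ * one_sub_pT_sub hD)

end StationaryPoint

/-- For integers `s ≥ 3` and `r ≥ s+1` and real `τ > 1`, if all four first-order partial
derivatives of `φ` vanish at `x_τ = (α_τ,β_τ,γ_τ,δ_τ)`, then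
`φ(x_τ) = ln τ + ((s−1)/s)(rs−r−s)·ln(rs−r−s−sα_τ)`. -/
theorem stmt_17 (r s : ℤ) (hs : 3 ≤ s) (hr : s + 1 ≤ r) (τ : ℝ) (hτ : 1 < τ)
    (h1 : deriv (fun x => phiRS r s x (betaT r s τ) (gammaT r s τ) (deltaT r s τ))
        (alphaT r s τ) = 0)
    (h2 : deriv (fun x => phiRS r s (alphaT r s τ) x (gammaT r s τ) (deltaT r s τ))
        (betaT r s τ) = 0)
    (h3 : deriv (fun x => phiRS r s (alphaT r s τ) (betaT r s τ) x (deltaT r s τ))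
        (gammaT r s τ) = 0)
    (h4 : deriv (fun x => phiRS r s (alphaT r s τ) (betaT r s τ) (gammaT r s τ) x)
        (deltaT r s τ) = 0) :
    phiRS r s (alphaT r s τ) (betaT r s τ) (gammaT r s τ) (deltaT r s τ) =
      Real.log τ + (((s : ℝ) - 1) / (s : ℝ)) * ((r : ℝ) * s - r - s) *
        Real.log ((r : ℝ) * s - r - s - (s : ℝ) * alphaT r s τ) := by
  have hs' : (3 : ℝ) ≤ s := by exact_mod_cast hs
  have hr' : (s : ℝ) + 1 ≤ r := by exact_mod_cast hr
  have hx := memIntK_xτ hs' hr' hτ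
  have hD := DT_pos (kap3_pos hs' (by linarith)) hτ
  have hrest : 0 < 1 - alphaT r s τ - betaT r s τ - gammaT r s τ := by
    have := hx.2.2.2.2
    linarith
  have hlog : log (1 - alphaT r s τ - betaT r s τ)
      = log τ + log (1 - alphaT r s τ - betaT r s τ - gammaT r s τ) := by
    rw [← log_mul (by linarith) hrest.ne', ← one_sub_alphaT_sub_betaT hD.ne']
  rw [phiRS_of_deriv_eq_zero hs' hr' hx h1 h2 h3 h4, hlog]
  ring
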